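/- Let T_r be a non-trivial rooted tree and let k be the maximum thinness over all child subtrees of the root r. Then k ≤ thin(T_r) ≤ k + 1. -/

import Mathlib

open SimpleGraph

variable {V : Type*}

def Consistent (G : SimpleGraph V) (r : V → V → Prop) {k : ℕ} (C : V → Fin k) : Prop :=
  ∀ u v w, r u v → r v w → C u = C v → G.Adj u w → G.Adj v w

def IsKThin (G : SimpleGraph V) (k : ℕ) : Prop :=
  ∃ r : V → V → Prop, IsStrictTotalOrder V r ∧ ∃ C : V → Fin k, Consistent G r C

noncomputable def Thinness (G : SimpleGraph V) : ℕ := sInf {k | IsKThin G k}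

noncomputable def DanglingThin (G : SimpleGraph V) (v u : V) : ℕ :=
  Thinness (G.induce ((G.deleteEdges {s(v,u)}).connectedComponentMk u).supp)

def KNeighbor (G : SimpleGraph V) (k : ℕ) (x v : V) : Prop :=
  G.Adj x v ∧ ∃ u, G.Adj v u ∧ u ≠ x ∧ k ≤ DanglingThin G v u

def IsChild (G : SimpleGraph V) (rt x v : V) : Prop :=
  G.Adj x v ∧ G.dist rt x + 1 = G.dist rt v

def IsAncestor (G : SimpleGraph V) (rt v x : V) : Prop :=
  v ≠ x ∧ G.dist rt v + G.dist v x = G.dist rt x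

def Subtree (G : SimpleGraph V) (rt v : V) : Set V :=
  {w | G.dist rt v + G.dist v w = G.dist rt w}

def ChildKNeighbor (G : SimpleGraph V) (rt : V) (k : ℕ) (x v : V) : Prop :=
  IsChild G rt x v ∧ KNeighbor G k x v

noncomputable def Critical (G : SimpleGraph V) (rt x : V) : Prop :=
  {v | ChildKNeighbor G rt (Thinness G) x v}.ncard = 2

/-!
Thinness is monotone under induced subgraphs, which gives the lower bound. Deleting the root
leaves the disjoint union of the child subtrees; since no edge joins two of them, their
`k`-thin orderings can be concatenated block by block into a `k`-thin ordering of the forest.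
Putting the root first, in a class of its own, costs one more class.
-/

namespace IsKThin

variable {W : Type*} {G : SimpleGraph V} {H : SimpleGraph W} {k m : ℕ}

theorem mono (h : IsKThin G k) (hkm : k ≤ m) : IsKThin G m := by
  obtain ⟨r, hr, C, hC⟩ := h
  exact ⟨r, hr, Fin.castLE hkm ∘ C, fun u v w huv hvw hc ↦
    hC u v w huv hvw (Fin.castLE_injective hkm hc)⟩

theorem of_embedding (f : G ↪g H) (h : IsKThin H k) : IsKThin G k := by
  obtain ⟨r, hr, C, hC⟩ := h
  refine ⟨f ⁻¹'o r, (RelEmbedding.preimage f.toEmbedding r).isStrictTotalOrder, C ∘ f, ?_⟩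
  intro u v w huv hvw hc hadj
  exact f.map_adj_iff.1 (hC _ _ _ huv hvw hc (f.map_adj_iff.2 hadj))

theorem of_injective {C : V → Fin k} (hC : Function.Injective C) : IsKThin G k := by
  refine ⟨C ⁻¹'o (· < ·), (RelEmbedding.preimage ⟨C, hC⟩ (· < ·)).isStrictTotalOrder, C, ?_⟩
  intro u v w huv _ hc
  exact absurd huv (by simp [Order.Preimage, hc])

theorem exists_of_finite [Finite V] (G : SimpleGraph V) : ∃ k, IsKThin G k :=
  let ⟨n, ⟨e⟩⟩ := Finite.exists_equiv_fin V
  ⟨n, of_injective e.injective⟩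

theorem sigma {ι : Type*} {α : ι → Type*} {G : SimpleGraph (Σ i, α i)}
    (hG : ∀ x y, G.Adj x y → x.1 = y.1) (h : ∀ i, IsKThin (G.comap (Sigma.mk i)) k) :
    IsKThin G k := by
  choose r hr C hC using h
  refine ⟨Sigma.Lex WellOrderingRel r, { }, fun x ↦ C x.1 x.2, ?_⟩
  rintro ⟨i, a⟩ ⟨j, b⟩ ⟨l, c⟩ hab hbc hc hadj
  obtain rfl : i = l := hG _ _ hadj
  cases hab with
  | left _ _ hij =>
    cases hbc with
    | left _ _ hji => exact absurd (_root_.trans hij hji) (irrefl i)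
    | right => exact absurd hij (irrefl i)
  | right a b hab =>
    cases hbc with
    | left _ _ hii => exact absurd hii (irrefl i)
    | right b c hbc => exact hC i a b c hab hbc hc hadj

theorem of_fibers {ι : Type*} (P : V → ι) (hP : ∀ u w, G.Adj u w → P u = P w)
    (h : ∀ i, IsKThin (G.induce {x | P x = i}) k) : IsKThin G k := by
  let e := Equiv.sigmaFiberEquiv P
  refine (sigma (G := G.comap e) ?_ h).of_embedding (Iso.comap e G).symm.toEmbedding
  rintro ⟨i, u, rfl⟩ ⟨j, w, rfl⟩ hadj
  exact hP u w hadj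

theorem sum_of_subsingleton {α β : Type*} [Subsingleton α] {G : SimpleGraph (α ⊕ β)}
    (h : IsKThin (G.comap Sum.inr) k) : IsKThin G (k + 1) := by
  obtain ⟨r, hr, C, hC⟩ := h
  refine ⟨Sum.Lex WellOrderingRel r, { }, Sum.elim (fun _ ↦ Fin.last k) (Fin.castSucc ∘ C), ?_⟩
  rintro (a | a) (b | b) w hab hbc hc hadj
  · cases Subsingleton.elim a b
    exact absurd (Sum.lex_inl_inl.1 hab) (irrefl a)
  · exact absurd hc (Fin.castSucc_lt_last _).ne'
  · exact absurd hab Sum.lex_inr_inl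
  · obtain _ | c := w
    · exact absurd hbc Sum.lex_inr_inl
    · exact hC a b c (Sum.lex_inr_inr.1 hab) (Sum.lex_inr_inr.1 hbc)
        (Fin.castSucc_injective _ hc) hadj

theorem of_induce_compl_singleton (x : V) (h : IsKThin (G.induce {x}ᶜ) k) :
    IsKThin G (k + 1) := by
  classical
  let e := Equiv.sumCompl (· = x)
  exact (sum_of_subsingleton (G := G.comap e) h).of_embedding (Iso.comap e G).symm.toEmbedding

end IsKThin

theorem isKThin_thinness [Finite V] (G : SimpleGraph V) : IsKThin G (Thinness G) :=
  Nat.sInf_mem (IsKThin.exists_of_finite G)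

theorem thinness_le {G : SimpleGraph V} {k : ℕ} (h : IsKThin G k) : Thinness G ≤ k :=
  Nat.sInf_le h

theorem thinness_le_of_embedding {W : Type*} [Finite W] {G : SimpleGraph V} {H : SimpleGraph W}
    (f : G ↪g H) : Thinness G ≤ Thinness H :=
  thinness_le ((isKThin_thinness H).of_embedding f)

namespace SimpleGraph

variable {G : SimpleGraph V} {rt u v w : V}

theorem Walk.dist_add_dist_of_mem_support {a b x : V} {p : G.Walk a b}
    (hp : p.length = G.dist a b) (hx : x ∈ p.support) :
    G.dist a x + G.dist x b = G.dist a b := by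
  classical
  rw [← length_eq_dist_of_subwalk hp (p.isSubwalk_takeUntil hx),
    ← length_eq_dist_of_subwalk hp (p.isSubwalk_dropUntil hx), ← hp, ← Walk.length_append,
    p.take_spec hx]

theorem Connected.exists_walk_length_eq_dist_mem_support (hG : G.Connected) {a b x : V}
    (h : G.dist a x + G.dist x b = G.dist a b) :
    ∃ p : G.Walk a b, p.length = G.dist a b ∧ x ∈ p.support := by
  obtain ⟨p, hp⟩ := hG.exists_walk_length_eq_dist a x
  obtain ⟨q, hq⟩ := hG.exists_walk_length_eq_dist x b
  exact ⟨p.append q, by rw [Walk.length_append, hp, hq, h],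
    (Walk.mem_support_append_iff _ _).2 (.inl p.end_mem_support)⟩

/-- Both `v` and `w` lie on the unique geodesic from `a` to `u`, `v` no farther from `a`. -/
theorem IsTree.dist_add_dist_of_dist_le (hT : G.IsTree) {a : V}
    (hv : G.dist a v + G.dist v u = G.dist a u) (hw : G.dist a w + G.dist w u = G.dist a u)
    (hvw : G.dist a v ≤ G.dist a w) : G.dist a v + G.dist v w = G.dist a w := by
  obtain ⟨p, hp, hvp⟩ := hT.connected.exists_walk_length_eq_dist_mem_support hv
  obtain ⟨q₁, hq₁⟩ := hT.connected.exists_walk_length_eq_dist a w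
  obtain ⟨q₂, hq₂⟩ := hT.connected.exists_walk_length_eq_dist w u
  have hq : (q₁.append q₂).length = G.dist a u := by rw [Walk.length_append, hq₁, hq₂, hw]
  have hpq : p = q₁.append q₂ := congrArg Subtype.val <| (hT.isAcyclic.subsingleton_path a u).elim
    ⟨p, p.isPath_of_length_eq_dist hp⟩ ⟨_, Walk.isPath_of_length_eq_dist _ hq⟩
  rw [hpq, Walk.mem_support_append_iff] at hvp
  rcases hvp with hvq | hvq
  · exact q₁.dist_add_dist_of_mem_support hq₁ hvq
  · have := q₂.dist_add_dist_of_mem_support hq₂ hvq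
    have : G.dist w v = G.dist v w := G.dist_comm
    omega

theorem Connected.exists_adj_mem_subtree (hG : G.Connected) (hu : u ≠ rt) :
    ∃ v, G.Adj rt v ∧ u ∈ Subtree G rt v := by
  obtain ⟨p, hp⟩ := hG.exists_walk_length_eq_dist rt u
  have hnil : ¬p.Nil := fun h ↦ hu (h.eq).symm
  exact ⟨p.snd, p.adj_snd hnil, p.dist_add_dist_of_mem_support hp
    (List.mem_of_mem_tail (p.snd_mem_tail_support hnil))⟩

theorem IsTree.mem_subtree_of_adj (hT : G.IsTree) (hu : u ∈ Subtree G rt v) (huw : G.Adj u w)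
    (hvw : G.dist rt v ≤ G.dist rt w) : w ∈ Subtree G rt v := by
  have hu : G.dist rt v + G.dist v u = G.dist rt u := hu
  have huw' : G.dist u w = 1 := dist_eq_one_iff_adj.2 huw
  have hwu : G.dist w u = 1 := dist_eq_one_iff_adj.2 huw.symm
  show G.dist rt v + G.dist v w = G.dist rt w
  rcases hT.dist_eq_dist_add_one_of_adj rt huw with h | h
  · exact hT.dist_add_dist_of_dist_le hu (by omega) hvw
  · have : G.dist v w ≤ G.dist v u + G.dist u w := hT.connected.dist_triangle
    have : G.dist rt w ≤ G.dist rt v + G.dist v w := hT.connected.dist_triangle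
    omega

theorem IsTree.eq_of_mem_subtree (hT : G.IsTree) {v' : V} (hv : G.Adj rt v) (hv' : G.Adj rt v')
    (hu : u ∈ Subtree G rt v) (hu' : u ∈ Subtree G rt v') : v = v' := by
  have h := hT.dist_add_dist_of_dist_le hu hu'
  rw [dist_eq_one_iff_adj.2 hv, dist_eq_one_iff_adj.2 hv'] at h
  exact hT.connected.dist_eq_zero_iff.1 (by omega)

end SimpleGraph

theorem rooted_tree_bound_general [Fintype V] (G : SimpleGraph V) (hT : G.IsTree)
    (rt : V) (k : ℕ)
    (hk : IsGreatest {m | ∃ v : V, G.Adj rt v ∧ Thinness (G.induce (Subtree G rt v)) = m} k) :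
    k ≤ Thinness G ∧ Thinness G ≤ k + 1 := by
  obtain ⟨⟨v₀, -, hv₀⟩, hmax⟩ := hk
  refine ⟨hv₀ ▸ thinness_le_of_embedding (Embedding.induce _), thinness_le ?_⟩
  have hchild (u : ({rt}ᶜ : Set V)) : ∃ v : {v // G.Adj rt v}, u.1 ∈ Subtree G rt v :=
    let ⟨v, hv, hu⟩ := hT.connected.exists_adj_mem_subtree u.2
    ⟨⟨v, hv⟩, hu⟩
  choose P hP using hchild
  refine .of_induce_compl_singleton rt (.of_fibers P ?_ fun i ↦ ?_)
  · intro u w huw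
    have hw := hT.mem_subtree_of_adj (hP u) huw <| by
      rw [dist_eq_one_iff_adj.2 (P u).2]
      exact hT.connected.pos_dist_of_ne fun h ↦ w.2 h.symm
    exact Subtype.ext (hT.eq_of_mem_subtree (P u).2 (P w).2 hw (hP w))
  · have hfiber : (G.induce {rt}ᶜ).induce {x | P x = i} ↪g G.induce (Subtree G rt i) :=
      { toFun x := ⟨x.1.1, by obtain ⟨u, rfl : P u = i⟩ := x; exact hP u⟩
        inj' x y h := Subtype.ext <| Subtype.ext <| Subtype.mk.inj h
        map_rel_iff' := Iff.rfl }
    exact ((isKThin_thinness _).mono (hmax ⟨i.1, i.2, rfl⟩)).of_embedding hfiber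

theorem rooted_tree_bound [Fintype V] (G : SimpleGraph V) (hT : G.IsTree)
    (rt : V) (hn : 2 ≤ Fintype.card V) (k : ℕ)
    (hk : IsGreatest {m | ∃ v : V, G.Adj rt v ∧ Thinness (G.induce (Subtree G rt v)) = m} k) :
    k ≤ Thinness G ∧ Thinness G ≤ k + 1 :=
  rooted_tree_bound_general G hT rt k hk
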